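/- arXiv:1612.05818 — 2 statements merged into one kernel-verified Lean document; each statement's English description precedes it below -/
import Mathlib

section
/- Let R be a 6×6 real matrix with the sign pattern T: r11>0, r12>0, r21<0, r22<0, r23>0, r34>0, r45>0, r51<0, r52<0, r56>0, r61>0, r62>0, r63>0, r65<0, and all other entries zero. Then the coefficient of t^3 in the characteristic polynomial of R equals (r11 + r22)·r56·r65, and the coefficient of t^5 equals -(r11 + r22). -/
open Polynomial Matrix
open scoped Classical

def hasSign {m : Type*} (P M : Matrix m m ℝ) : Prop :=
  ∀ i j, Real.sign (M i j) = P i j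

def patT : Matrix (Fin 6) (Fin 6) ℝ :=
  !![1,1,0,0,0,0; -1,-1,1,0,0,0; 0,0,0,1,0,0; 0,0,0,0,1,0;
     -1,-1,0,0,0,1; 1,1,1,0,-1,0]

def patT' : Matrix (Fin 6) (Fin 6) ℝ :=
  !![1,1,0,0,0,0; -1,-1,1,0,0,0; 1,0,0,1,0,0; 0,0,0,0,1,0;
     -1,-1,0,0,0,1; 1,1,1,0,-1,0]

/-!
Only the zero pattern of `R` matters: `R` is determined by the fourteen entries that the
pattern allows to be nonzero, and the characteristic polynomial of the general matrix with
that support is computed symbolically by Laplace expansion along first rows.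
-/

def patTMatrix (a b c d e f g h i j k l m n : ℝ) : Matrix (Fin 6) (Fin 6) ℝ :=
  !![a,b,0,0,0,0; c,d,e,0,0,0; 0,0,0,f,0,0; 0,0,0,0,g,0;
     h,i,0,0,0,j; k,l,m,0,n,0]

theorem hasSign.apply_eq_zero {ι : Type*} {P M : Matrix ι ι ℝ} (hM : hasSign P M) {i j : ι}
    (hP : P i j = 0) : M i j = 0 :=
  Real.sign_eq_zero_iff.mp ((hM i j).trans hP)

theorem hasSign.eq_patTMatrix {R : Matrix (Fin 6) (Fin 6) ℝ} (hR : hasSign patT R) :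
    R = patTMatrix (R 0 0) (R 0 1) (R 1 0) (R 1 1) (R 1 2) (R 2 3) (R 3 4)
      (R 4 0) (R 4 1) (R 4 5) (R 5 0) (R 5 1) (R 5 2) (R 5 4) := by
  ext i j
  fin_cases i <;> fin_cases j <;> first | rfl | exact hR.apply_eq_zero rfl

set_option maxHeartbeats 1000000 in
theorem charpoly_patTMatrix (a b c d e f g h i j k l m n : ℝ) :
    (patTMatrix a b c d e f g h i j k l m n).charpoly =
      X ^ 6 + C (-(a + d)) * X ^ 5 + C (a * d - b * c - j * n) * X ^ 4
        + C ((a + d) * j * n) * X ^ 3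
        + C (-(f * g * j * m) - (a * d - b * c) * (j * n) - e * f * g * i) * X ^ 2
        + C ((a + d) * (f * g * j * m) + e * f * g * (a * i - j * l) - b * e * f * g * h) * X
        + C (-(a * d - b * c) * (f * g * j * m) + a * e * f * g * j * l
          - b * e * f * g * j * k) := by
  rw [Matrix.charpoly, patTMatrix]
  simp [charmatrix_apply, Matrix.det_succ_row_zero,
    Fin.sum_univ_succ, Fin.succAbove, Matrix.diagonal_apply]
  ring

theorem stmt_3 (R : Matrix (Fin 6) (Fin 6) ℝ) (hR : hasSign patT R) :
    R.charpoly.coeff 3 = (R 0 0 + R 1 1) * R 4 5 * R 5 4 ∧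
    R.charpoly.coeff 5 = -(R 0 0 + R 1 1) := by
  have hchar := charpoly_patTMatrix (R 0 0) (R 0 1) (R 1 0) (R 1 1) (R 1 2) (R 2 3) (R 3 4)
    (R 4 0) (R 4 1) (R 4 5) (R 5 0) (R 5 1) (R 5 2) (R 5 4)
  rw [← hR.eq_patTMatrix] at hchar
  rw [hchar]
  constructor <;>
    simp only [coeff_add, coeff_C_mul, coeff_X_pow, coeff_C, coeff_X] <;> norm_num
end

section
/- Let a0, a1, a2, a3, a4, a5 be real numbers with a5 ≠ 0 and a3/a5 > 0. Then there exist positive real numbers x1,...,x9 such that the 6×6 matrix X with rows (x1, 1, 0, 0, 0, 0), (-x4, -x2, 1, 0, 0, 0), (0, 0, 0, 1, 0, 0), (0, 0, 0, 0, 1, 0), (-x6, -x5, 0, 0, 0, 1), (x7, x8, x9, 0, -x3, 0) has characteristic polynomial t^6 + a5·t^5 + a4·t^4 + a3·t^3 + a2·t^2 + a1·t + a0. -/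
/-! The coefficients of the characteristic polynomial of `matX` are triangular in the entries:
once `x1`, `x8`, `x9` are chosen freely, matching `a5, …, a0` in turn determines `x2, x3, x4, x5,
x6, x7` uniquely, with `x3 = a3 / a5`. Taking `x9` large makes `x5` positive, and then `x2, x4,
x6, x7` grow without bound in `x1`, so a large `x1` makes every entry positive. -/

open Polynomial Matrix
open scoped Classical

def matX (x1 x2 x3 x4 x5 x6 x7 x8 x9 : ℝ) : Matrix (Fin 6) (Fin 6) ℝ :=
  !![x1, 1, 0, 0, 0, 0;
     -x4, -x2, 1, 0, 0, 0;
     0, 0, 0, 1, 0, 0;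
     0, 0, 0, 0, 1, 0;
     -x6, -x5, 0, 0, 0, 1;
     x7, x8, x9, 0, -x3, 0]

open Filter

theorem det_lowerHessenberg_pattern {R : Type*} [CommRing R] (t y1 y2 y3 y4 y5 y6 y7 y8 y9 : R) :
    det !![t - y1, -1, 0, 0, 0, 0;
      y4, t + y2, -1, 0, 0, 0;
      0, 0, t, -1, 0, 0;
      0, 0, 0, t, -1, 0;
      y6, y5, 0, 0, t, -1;
      -y7, -y8, -y9, 0, y3, t] =
    t ^ 6 + (y2 - y1) * t ^ 5 + (y3 + y4 - y1 * y2) * t ^ 4 + (y2 - y1) * y3 * t ^ 3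
      + (y5 + y3 * y4 - y1 * y2 * y3 - y9) * t ^ 2 + (y6 - y8 - (y2 - y1) * y9 - y1 * y5) * t
      + (y1 * y2 * y9 + y1 * y8 - y4 * y9 - y7) := by
  simp [det_succ_row_zero, Fin.sum_univ_succ, Fin.succAbove]
  ring

theorem charmatrix_matX (x1 x2 x3 x4 x5 x6 x7 x8 x9 : ℝ) :
    charmatrix (matX x1 x2 x3 x4 x5 x6 x7 x8 x9) =
    !![X - C x1, -1, 0, 0, 0, 0;
      C x4, X + C x2, -1, 0, 0, 0;
      0, 0, X, -1, 0, 0;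
      0, 0, 0, X, -1, 0;
      C x6, C x5, 0, 0, X, -1;
      -C x7, -C x8, -C x9, 0, C x3, X] := by
  ext i j
  fin_cases i <;> fin_cases j <;> simp [matX]

theorem charpoly_matX (x1 x2 x3 x4 x5 x6 x7 x8 x9 : ℝ) :
    (matX x1 x2 x3 x4 x5 x6 x7 x8 x9).charpoly =
      X ^ 6 + C (x2 - x1) * X ^ 5 + C (x3 + x4 - x1 * x2) * X ^ 4 +
        C ((x2 - x1) * x3) * X ^ 3 + C (x5 + x3 * x4 - x1 * x2 * x3 - x9) * X ^ 2 +
        C (x6 - x8 - (x2 - x1) * x9 - x1 * x5) * X +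
        C (x1 * x2 * x9 + x1 * x8 - x4 * x9 - x7) := by
  rw [charpoly, charmatrix_matX, det_lowerHessenberg_pattern]
  simp only [map_sub, map_add, map_mul]

theorem charpoly_matX_eq_of_free_params {a0 a1 a2 a3 a4 a5 : ℝ} (ha5 : a5 ≠ 0)
    (x1 x8 x9 : ℝ) :
    let b := a3 / a5
    let x5 := a2 + x9 - b * (a4 - b)
    (matX x1 (x1 + a5) b (a4 - b + x1 * (x1 + a5)) x5 (a1 + x8 + a5 * x9 + x1 * x5)
        (x9 * (b - a4) - a0 + x1 * x8) x8 x9).charpoly =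
      X ^ 6 + C a5 * X ^ 5 + C a4 * X ^ 4 + C a3 * X ^ 3 +
        C a2 * X ^ 2 + C a1 * X + C a0 := by
  intro b x5
  have hb : a5 * b = a3 := mul_div_cancel₀ a3 ha5
  rw [charpoly_matX]
  congrm X ^ 6 + C ?_ * X ^ 5 + C ?_ * X ^ 4 + C ?_ * X ^ 3 + C ?_ * X ^ 2 + C ?_ * X + C ?_
  all_goals first | linear_combination hb | ring

theorem stmt_5 (a0 a1 a2 a3 a4 a5 : ℝ) (ha5 : a5 ≠ 0) (h : 0 < a3 / a5) :
    ∃ x1 x2 x3 x4 x5 x6 x7 x8 x9 : ℝ,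
      0 < x1 ∧ 0 < x2 ∧ 0 < x3 ∧ 0 < x4 ∧ 0 < x5 ∧ 0 < x6 ∧ 0 < x7 ∧ 0 < x8 ∧ 0 < x9 ∧
      (matX x1 x2 x3 x4 x5 x6 x7 x8 x9).charpoly =
        X ^ 6 + C a5 * X ^ 5 + C a4 * X ^ 4 + C a3 * X ^ 3 +
          C a2 * X ^ 2 + C a1 * X + C a0 := by
  set b := a3 / a5
  obtain ⟨x9, hx9, hx5⟩ : ∃ x9 : ℝ, 0 < x9 ∧ 0 < a2 + x9 - b * (a4 - b) :=
    ⟨|a2 - b * (a4 - b)| + 1, by positivity, by linarith [neg_abs_le (a2 - b * (a4 - b))]⟩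
  set x5 := a2 + x9 - b * (a4 - b)
  have lim2 : Tendsto (fun x1 => x1 + a5) atTop atTop :=
    tendsto_atTop_add_const_right _ _ tendsto_id
  have lim4 : Tendsto (fun x1 => a4 - b + x1 * (x1 + a5)) atTop atTop :=
    tendsto_atTop_add_const_left _ _ (tendsto_id.atTop_mul_atTop₀ lim2)
  have lim6 : Tendsto (fun x1 => a1 + 1 + a5 * x9 + x1 * x5) atTop atTop :=
    tendsto_atTop_add_const_left _ _ (tendsto_id.atTop_mul_const hx5)
  have lim7 : Tendsto (fun x1 => x9 * (b - a4) - a0 + x1 * 1) atTop atTop :=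
    tendsto_atTop_add_const_left _ _ (tendsto_id.atTop_mul_const one_pos)
  obtain ⟨x1, hx1, hx2, hx4, hx6, hx7⟩ := ((eventually_gt_atTop 0).and
    ((lim2.eventually_gt_atTop 0).and ((lim4.eventually_gt_atTop 0).and
      ((lim6.eventually_gt_atTop 0).and (lim7.eventually_gt_atTop 0))))).exists
  exact ⟨_, _, _, _, _, _, _, _, _, hx1, hx2, h, hx4, hx5, hx6, hx7, one_pos, hx9,
    charpoly_matX_eq_of_free_params ha5 x1 1 x9⟩
end
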